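/- arXiv:1605.03276 — 2 statements merged into one kernel-verified Lean document; each statement's English description precedes it below -/
import Mathlib

section
/- Let Γ_{x_0} be the finite subtree below a vertex x_0 of level at least 1 in a one-ended levelled tree, and let J be a Jacobi operator on Γ with positive coefficients λ and real coefficients β. For every nonreal z there exists a nonzero function v on Γ_{x_0} satisfying (Jv)(x) = z v(x) for all x ∈ Γ_{x_0} \ {x_0}; moreover v vanishes nowhere on Γ_{x_0}, and any two such functions are proportional. -/
/-- A one-ended levelled tree: every vertex `x` has a unique upward neighbor
`parent x` (written `x'`) one level up, and a finite set `children x` of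
downward neighbors one level down; the tree is connected with one end. -/
structure JTree where
  V : Type
  parent : V → V
  level : V → ℕ
  level_parent : ∀ x, level (parent x) = level x + 1
  children : V → Finset V
  mem_children : ∀ x y : V, y ∈ children x ↔ parent y = x
  connected : ∀ x y : V, ∃ k l : ℕ, parent^[k] x = parent^[l] y
  subtree_finite : ∀ x : V, {t : V | ∃ k : ℕ, parent^[k] t = x}.Finite

namespace JTree

variable (T : JTree)

/-- `T.descend t x` means `t` belongs to the finite subtree `Γ_x` below (and
including) the vertex `x`. -/
def descend (t x : T.V) : Prop := ∃ k : ℕ, T.parent^[k] t = x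

/-- The Jacobi operator on the tree:
`(Jv)(x) = λ_x v(x') + β_x v(x) + Σ_{y ∈ N_x} λ_y v(y)`. -/
noncomputable def jacobi (lam beta : T.V → ℝ) (v : T.V → ℂ) (x : T.V) : ℂ :=
  (lam x : ℂ) * v (T.parent x) + (beta x : ℂ) * v x +
    ∑ y ∈ T.children x, (lam y : ℂ) * v y

end JTree

lemma level_lt_children {T : JTree} {x y : T.V} (h : y ∈ T.children x) :
    T.level y < T.level x := by
  rw [T.mem_children] at h
  subst h
  rw [T.level_parent]
  omega

noncomputable def mfun (T : JTree) (lam beta : T.V → ℝ) (z : ℂ) (t : T.V) : ℂ :=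
  (lam t : ℂ) /
    ((z - (beta t : ℂ)) -
      ∑ y ∈ (T.children t).attach, (lam y.1 : ℂ) * mfun T lam beta z y.1)
termination_by T.level t
decreasing_by exact level_lt_children y.2

noncomputable def Dfun (T : JTree) (lam beta : T.V → ℝ) (z : ℂ) (t : T.V) : ℂ :=
  (z - (beta t : ℂ)) - ∑ y ∈ T.children t, (lam y : ℂ) * mfun T lam beta z y

lemma mfun_eq (T : JTree) (lam beta : T.V → ℝ) (z : ℂ) (t : T.V) :
    mfun T lam beta z t = (lam t : ℂ) / Dfun T lam beta z t := by
  rw [mfun, Dfun, Finset.sum_attach (T.children t) (fun y => (lam y : ℂ) * mfun T lam beta z y)]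

lemma key (T : JTree) (lam beta : T.V → ℝ) (hlam : ∀ t, 0 < lam t)
    (z : ℂ) (hz : z.im ≠ 0) (t : T.V) :
    0 < z.im * (Dfun T lam beta z t).im ∧ z.im * (mfun T lam beta z t).im < 0 := by
  have H : ∀ n : ℕ, ∀ t : T.V, T.level t < n →
      0 < z.im * (Dfun T lam beta z t).im ∧ z.im * (mfun T lam beta z t).im < 0 := by
    intro n
    induction n with
    | zero => intro t ht; omega
    | succ n ih =>
      intro t ht
      have hD : 0 < z.im * (Dfun T lam beta z t).im := by
        have him : (Dfun T lam beta z t).im =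
            z.im - ∑ y ∈ T.children t, lam y * (mfun T lam beta z y).im := by
          simp [Dfun, Complex.sub_im, Complex.im_sum, Complex.im_ofReal_mul]
        have heq : z.im * (Dfun T lam beta z t).im =
            z.im ^ 2 - ∑ y ∈ T.children t, lam y * (z.im * (mfun T lam beta z y).im) := by
          rw [him, mul_sub, Finset.mul_sum]
          congr 1
          · ring
          · exact Finset.sum_congr rfl fun y _ => by ring
        rw [heq]
        have hsum : ∑ y ∈ T.children t, lam y * (z.im * (mfun T lam beta z y).im) ≤ 0 := by
          apply Finset.sum_nonpos
          intro y hy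
          have h1 := (ih y (by have := level_lt_children hy; omega)).2
          have h2 := hlam y
          nlinarith
        have : 0 < z.im ^ 2 := by positivity
        linarith
      refine ⟨hD, ?_⟩
      have hns : 0 < Complex.normSq (Dfun T lam beta z t) := by
        apply Complex.normSq_pos.2
        intro h0
        rw [h0] at hD
        simp at hD
      rw [mfun_eq, Complex.div_im]
      simp only [Complex.ofReal_im, Complex.ofReal_re]
      have hl := hlam t
      rw [show (0 : ℝ) * (Dfun T lam beta z t).re / Complex.normSq (Dfun T lam beta z t) -
          lam t * (Dfun T lam beta z t).im / Complex.normSq (Dfun T lam beta z t) =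
          -(lam t * (Dfun T lam beta z t).im / Complex.normSq (Dfun T lam beta z t)) by ring]
      have : 0 < lam t * (z.im * (Dfun T lam beta z t).im) / Complex.normSq (Dfun T lam beta z t) := by
        positivity
      rw [mul_neg]
      have heq2 : z.im * (lam t * (Dfun T lam beta z t).im / Complex.normSq (Dfun T lam beta z t)) =
          lam t * (z.im * (Dfun T lam beta z t).im) / Complex.normSq (Dfun T lam beta z t) := by
        ring
      rw [heq2]
      linarith
  exact H (T.level t + 1) t (by omega)

lemma Dfun_ne (T : JTree) (lam beta : T.V → ℝ) (hlam : ∀ t, 0 < lam t)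
    (z : ℂ) (hz : z.im ≠ 0) (t : T.V) : Dfun T lam beta z t ≠ 0 := by
  intro h0
  have := (key T lam beta hlam z hz t).1
  rw [h0] at this; simp at this

lemma mfun_ne (T : JTree) (lam beta : T.V → ℝ) (hlam : ∀ t, 0 < lam t)
    (z : ℂ) (hz : z.im ≠ 0) (t : T.V) : mfun T lam beta z t ≠ 0 := by
  intro h0
  have := (key T lam beta hlam z hz t).2
  rw [h0] at this; simp at this

lemma lam_eq (T : JTree) (lam beta : T.V → ℝ) (hlam : ∀ t, 0 < lam t)
    (z : ℂ) (hz : z.im ≠ 0) (t : T.V) :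
    (lam t : ℂ) = mfun T lam beta z t * Dfun T lam beta z t := by
  rw [mfun_eq, div_mul_cancel₀]
  exact Dfun_ne T lam beta hlam z hz t

lemma level_iterate (T : JTree) (t : T.V) (k : ℕ) :
    T.level (T.parent^[k] t) = T.level t + k := by
  induction k with
  | zero => simp
  | succ k ih => rw [Function.iterate_succ_apply', T.level_parent, ih]; omega

lemma descend_level {T : JTree} {t x₀ : T.V} (h : T.descend t x₀) :
    T.level x₀ = T.level t + (T.level x₀ - T.level t) ∧
    T.parent^[T.level x₀ - T.level t] t = x₀ := by
  obtain ⟨k, hk⟩ := h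
  have hl : T.level x₀ = T.level t + k := by rw [← hk, level_iterate]
  have : T.level x₀ - T.level t = k := by omega
  rw [this]
  exact ⟨hl, hk⟩

lemma descend_parent {T : JTree} {t x₀ : T.V} (h : T.descend t x₀) (hne : t ≠ x₀) :
    T.descend (T.parent t) x₀ ∧ T.level t < T.level x₀ := by
  obtain ⟨k, hk⟩ := h
  match k with
  | 0 => exact absurd hk hne
  | k + 1 =>
    rw [Function.iterate_succ_apply] at hk
    refine ⟨⟨k, hk⟩, ?_⟩
    have : T.level x₀ = T.level t + (k + 1) := by
      rw [← hk, level_iterate, T.level_parent]; omega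
    omega

lemma descend_child {T : JTree} {t x₀ y : T.V} (h : T.descend t x₀)
    (hy : y ∈ T.children t) : T.descend y x₀ ∧ y ≠ x₀ := by
  rw [T.mem_children] at hy
  obtain ⟨k, hk⟩ := h
  have hd : T.descend y x₀ := ⟨k + 1, by rw [Function.iterate_succ_apply, hy, hk]⟩
  refine ⟨hd, ?_⟩
  intro hex
  subst hex
  obtain ⟨m, hm⟩ := hd
  have := level_iterate T y m
  rw [hm] at this
  have hy' : T.level t = T.level y + 1 := by rw [← hy, T.level_parent]
  have hk' := level_iterate T y (k+1)
  rw [Function.iterate_succ_apply, hy, hk] at hk'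
  omega

noncomputable def vfun (T : JTree) (lam beta : T.V → ℝ) (z : ℂ) (x₀ t : T.V) : ℂ :=
  ∏ j ∈ Finset.range (T.level x₀ - T.level t), mfun T lam beta z (T.parent^[j] t)

lemma vfun_x₀ (T : JTree) (lam beta : T.V → ℝ) (z : ℂ) (x₀ : T.V) :
    vfun T lam beta z x₀ x₀ = 1 := by
  simp [vfun]

lemma vfun_ne (T : JTree) (lam beta : T.V → ℝ) (hlam : ∀ t, 0 < lam t)
    (z : ℂ) (hz : z.im ≠ 0) (x₀ t : T.V) : vfun T lam beta z x₀ t ≠ 0 :=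
  Finset.prod_ne_zero_iff.2 fun j _ => mfun_ne T lam beta hlam z hz _

lemma vfun_step {T : JTree} (lam beta : T.V → ℝ) (z : ℂ) {x₀ t : T.V}
    (h : T.descend t x₀) (hne : t ≠ x₀) :
    vfun T lam beta z x₀ t = mfun T lam beta z t * vfun T lam beta z x₀ (T.parent t) := by
  have hlt := (descend_parent h hne).2
  have hp : T.level (T.parent t) = T.level t + 1 := T.level_parent t
  have h1 : T.level x₀ - T.level t = (T.level x₀ - T.level (T.parent t)) + 1 := by omega
  rw [vfun, vfun, h1, Finset.prod_range_succ']
  simp only [Function.iterate_zero_apply]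
  rw [mul_comm]
  congr 1

lemma Dfun_def (T : JTree) (lam beta : T.V → ℝ) (z : ℂ) (t : T.V) :
    Dfun T lam beta z t =
      (z - (beta t : ℂ)) - ∑ y ∈ T.children t, (lam y : ℂ) * mfun T lam beta z y := rfl

lemma jacobi_eq (T : JTree) (lam beta : T.V → ℝ) (hlam : ∀ t, 0 < lam t)
    (z : ℂ) (hz : z.im ≠ 0) (v : T.V → ℂ) (t : T.V)
    (hvt : v t = mfun T lam beta z t * v (T.parent t))
    (hvy : ∀ y ∈ T.children t, v y = mfun T lam beta z y * v t) :
    T.jacobi lam beta v t = z * v t := by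
  have hs : ∑ y ∈ T.children t, (lam y : ℂ) * v y =
      (∑ y ∈ T.children t, (lam y : ℂ) * mfun T lam beta z y) * v t := by
    rw [Finset.sum_mul]
    exact Finset.sum_congr rfl fun y hy => by rw [hvy y hy]; ring
  have hl := lam_eq T lam beta hlam z hz t
  have hD := Dfun_def T lam beta z t
  rw [JTree.jacobi, hs, hvt, hl, hD]
  ring

lemma unique_step (T : JTree) (lam beta : T.V → ℝ) (hlam : ∀ t, 0 < lam t)
    (z : ℂ) (hz : z.im ≠ 0) (x₀ : T.V) (w : T.V → ℂ)
    (hw : ∀ t, T.descend t x₀ → t ≠ x₀ → T.jacobi lam beta w t = z * w t) :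
    ∀ t, T.descend t x₀ → t ≠ x₀ → w t = mfun T lam beta z t * w (T.parent t) := by
  have H : ∀ n : ℕ, ∀ t, T.level t < n → T.descend t x₀ → t ≠ x₀ →
      w t = mfun T lam beta z t * w (T.parent t) := by
    intro n
    induction n with
    | zero => intro t ht; omega
    | succ n ih =>
      intro t ht hd hne
      have hs : ∑ y ∈ T.children t, (lam y : ℂ) * w y =
          (∑ y ∈ T.children t, (lam y : ℂ) * mfun T lam beta z y) * w t := by
        rw [Finset.sum_mul]
        refine Finset.sum_congr rfl fun y hy => ?_
        obtain ⟨hdy, hny⟩ := descend_child hd hy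
        have hwy := ih y (by have := level_lt_children hy; omega) hdy hny
        have hpy : T.parent y = t := (T.mem_children t y).1 hy
        rw [hwy, hpy]
        ring
      have heq := hw t hd hne
      rw [JTree.jacobi, hs] at heq
      have h2 : (lam t : ℂ) * w (T.parent t) = Dfun T lam beta z t * w t := by
        rw [Dfun_def]
        linear_combination heq
      have hDne := Dfun_ne T lam beta hlam z hz t
      rw [mfun_eq]
      field_simp
      linear_combination -h2
  exact fun t hd hne => H (T.level t + 1) t (by omega) hd hne


/-- For any vertex `x₀` of level at least `1` and any nonreal `z` there is a nowhere
vanishing function `v` on `Γ_{x₀}` satisfying `(Jv)(t) = z v(t)` for all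
`t ∈ Γ_{x₀} \ {x₀}`, and it is unique up to a constant multiple. -/
theorem stmt_2 (T : JTree) (lam beta : T.V → ℝ) (hlam : ∀ t, 0 < lam t)
    (z : ℂ) (hz : z.im ≠ 0) (x₀ : T.V) (hx₀ : 1 ≤ T.level x₀) :
    ∃ v : T.V → ℂ,
      (∀ t, T.descend t x₀ → v t ≠ 0) ∧
      (∀ t, T.descend t x₀ → t ≠ x₀ → T.jacobi lam beta v t = z * v t) ∧
      (∀ w : T.V → ℂ,
        (∀ t, T.descend t x₀ → t ≠ x₀ → T.jacobi lam beta w t = z * w t) →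
        ∃ c : ℂ, ∀ t, T.descend t x₀ → w t = c * v t) := by
  refine ⟨vfun T lam beta z x₀, fun t _ => vfun_ne T lam beta hlam z hz x₀ t, ?_, ?_⟩
  · intro t hd hne
    refine jacobi_eq T lam beta hlam z hz _ t (vfun_step lam beta z hd hne) ?_
    intro y hy
    obtain ⟨hdy, hny⟩ := descend_child hd hy
    have hpy : T.parent y = t := (T.mem_children t y).1 hy
    rw [vfun_step lam beta z hdy hny, hpy]
  · intro w hw
    refine ⟨w x₀, ?_⟩
    have hstep := unique_step T lam beta hlam z hz x₀ w hw
    have H : ∀ k : ℕ, ∀ t, T.parent^[k] t = x₀ → w t = w x₀ * vfun T lam beta z x₀ t := by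
      intro k
      induction k with
      | zero => intro t ht; simp only [Function.iterate_zero_apply] at ht; subst ht
                rw [vfun_x₀]; ring
      | succ k ih =>
        intro t ht
        have hne : t ≠ x₀ := by
          intro h; subst h
          have := level_iterate T t (k+1)
          rw [ht] at this; omega
        have hd : T.descend t x₀ := ⟨k + 1, ht⟩
        rw [Function.iterate_succ_apply] at ht
        rw [hstep t hd hne, ih _ ht, vfun_step lam beta z hd hne]
        ring
    intro t hd
    obtain ⟨k, hk⟩ := hd
    exact H k t hk
end

section
/- Let J be a Jacobi operator on a one-ended levelled tree Γ whose coefficients along some infinite path {x_n} (with ℓ(x_n)=n) satisfy Σ_{n≥1} 1/λ_{x_n} = ∞. Then J, defined on finitely supported functions in ℓ²(Γ), is essentially self-adjoint. -/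
/-- A densely defined symmetric operator is essentially self-adjoint iff the ranges
of `A ± i` are dense. We use this as the definition. -/
def EssSelfAdjoint {E : Type*} [NormedAddCommGroup E] [InnerProductSpace ℂ E]
    (A : E →ₗ.[ℂ] E) : Prop :=
  Dense (Set.range fun x : A.domain => A x + Complex.I • (x : E)) ∧
  Dense (Set.range fun x : A.domain => A x - Complex.I • (x : E))

/-! If `Jg = zg` with `Im z ≠ 0`, summing `ḡ (Jg) - conj (Jg) g = 2i Im z |g|²` over the finite
subtree below a vertex `r` telescopes to the current `λ_r (ḡ(r) g(r') - ḡ(r') g(r))` through the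
edge above `r`, so `|Im z| Σ_{Γ_r} |g|² ≤ λ_r |g(r)| |g(r')|`. If `g(s) ≠ 0`, the path eventually
runs above `s`, so `|Im z| |g(s)|² ≤ λ_{x_n} |g(x_n)| |g(x_{n+1})|` for all large `n`; since
`g ∈ ℓ²` this makes `Σ 1/λ_{x_n}` finite. So `J` has no nonreal `ℓ²` eigenfunctions, while any
vector orthogonal to the range of `A + c` is one, with eigenvalue `-c̄`, because `J` is symmetric
against the point masses. -/

open scoped ComplexConjugate

theorem LinearPMap.dense_range_add_smul_of_orthogonal {E : Type*} [NormedAddCommGroup E]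
    [InnerProductSpace ℂ E] [CompleteSpace E] (A : E →ₗ.[ℂ] E) (c : ℂ)
    (h : ∀ g : E, (∀ f : A.domain, inner ℂ (A f + c • (f : E)) g = 0) → g = 0) :
    Dense (Set.range fun f : A.domain => A f + c • (f : E)) := by
  have hrange : (Set.range fun f : A.domain => A f + c • (f : E)) =
      LinearMap.range (A.toFun + c • A.domain.subtype) := by
    ext; simp [LinearPMap.toFun_eq_coe]
  rw [hrange, Submodule.dense_iff_topologicalClosure_eq_top,
    Submodule.topologicalClosure_eq_top_iff, Submodule.eq_bot_iff]
  intro g hg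
  exact h g fun f => (Submodule.mem_orthogonal _ g).mp hg _ ⟨f, rfl⟩

theorem summable_inv_of_le_mul_mul_succ {lam a : ℕ → ℝ} {c : ℝ} (hc : 0 < c)
    (hlam : ∀ n, 0 < lam n) (ha : Summable fun n => a n ^ 2)
    (h : ∀ n, c ≤ lam n * (a n * a (n + 1))) : Summable fun n => (lam n)⁻¹ := by
  have hbound : Summable fun n => (a n ^ 2 + a (n + 1) ^ 2) / (2 * c) :=
    (ha.add ((summable_nat_add_iff 1).mpr ha)).div_const _
  refine hbound.of_nonneg_of_le (fun n => (inv_pos.mpr (hlam n)).le) fun n => ?_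
  calc (lam n)⁻¹ ≤ a n * a (n + 1) / c := by
        rw [le_div_iff₀ hc, inv_mul_le_iff₀ (hlam n)]
        exact h n
    _ ≤ (a n ^ 2 + a (n + 1) ^ 2) / (2 * c) := by
      rw [div_le_div_iff₀ hc (by positivity)]
      nlinarith [two_mul_le_add_sq (a n) (a (n + 1))]

namespace JTree

variable (T : JTree)

theorem level_iterate_parent (t : T.V) (k : ℕ) :
    T.level (T.parent^[k] t) = T.level t + k := by
  induction k with
  | zero => rfl
  | succ k ih => rw [Function.iterate_succ_apply', T.level_parent, ih]; rfl

theorem not_descend_parent (r : T.V) : ¬ T.descend (T.parent r) r := by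
  rintro ⟨k, hk⟩
  have := T.level_iterate_parent (T.parent r) k
  rw [hk, T.level_parent] at this
  omega

theorem descend_of_mem_children {y t r : T.V} (hy : y ∈ T.children t) (h : T.descend t r) :
    T.descend y r := by
  obtain ⟨k, hk⟩ := h
  exact ⟨k + 1, by rw [Function.iterate_succ_apply, (T.mem_children t y).mp hy, hk]⟩

theorem descend_parent {t r : T.V} (h : T.descend t r) (hne : t ≠ r) :
    T.descend (T.parent t) r := by
  obtain ⟨_ | k, hk⟩ := h
  · exact absurd hk hne
  · exact ⟨k, hk⟩

theorem descend_iterate_parent {t r : T.V} (h : T.descend t r) (n : ℕ) :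
    T.descend t (T.parent^[n] r) := by
  obtain ⟨k, hk⟩ := h
  exact ⟨n + k, by rw [Function.iterate_add_apply, hk]⟩

noncomputable def subtree (r : T.V) : Finset T.V := (T.subtree_finite r).toFinset

theorem mem_subtree {t r : T.V} : t ∈ T.subtree r ↔ T.descend t r :=
  Set.Finite.mem_toFinset _

theorem self_mem_subtree (r : T.V) : r ∈ T.subtree r :=
  T.mem_subtree.mpr ⟨0, rfl⟩

theorem biUnion_children_subtree [DecidableEq T.V] (r : T.V) :
    (T.subtree r).biUnion T.children = (T.subtree r).erase r := by
  ext y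
  simp only [Finset.mem_biUnion, Finset.mem_erase, mem_subtree]
  constructor
  · rintro ⟨t, ht, hyt⟩
    refine ⟨?_, T.descend_of_mem_children hyt ht⟩
    rintro rfl
    exact T.not_descend_parent y ((T.mem_children t y).mp hyt ▸ ht)
  · rintro ⟨hne, hy⟩
    exact ⟨T.parent y, T.descend_parent hy hne, (T.mem_children _ y).mpr rfl⟩

theorem sum_sum_children_subtree [DecidableEq T.V] {M : Type*} [AddCommMonoid M] (r : T.V)
    (F : T.V → M) :
    ∑ t ∈ T.subtree r, ∑ y ∈ T.children t, F y = ∑ y ∈ (T.subtree r).erase r, F y := by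
  rw [← T.biUnion_children_subtree, Finset.sum_biUnion]
  intro a _ b _ hab
  refine Finset.disjoint_left.mpr fun y hya hyb => hab ?_
  rw [← (T.mem_children a y).mp hya, (T.mem_children b y).mp hyb]

variable (lam beta : T.V → ℝ)

/-- The Wronskian-type current of `g` through the edge joining `t` to its parent. -/
noncomputable def current (g : T.V → ℂ) (t : T.V) : ℂ :=
  lam t * (conj (g t) * g (T.parent t) - conj (g (T.parent t)) * g t)

theorem conj_mul_jacobi_sub (g : T.V → ℂ) (t : T.V) :
    conj (g t) * T.jacobi lam beta g t - conj (T.jacobi lam beta g t) * g t =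
      T.current lam g t - ∑ y ∈ T.children t, T.current lam g y := by
  have hchild : ∀ y ∈ T.children t, T.current lam g y =
      lam y * conj (g y) * g t - conj (g t) * (lam y * g y) := fun y hy => by
    rw [current, (T.mem_children t y).mp hy]; ring
  rw [Finset.sum_congr rfl hchild]
  simp only [jacobi, map_add, map_mul, map_sum, Complex.conj_ofReal, Finset.sum_sub_distrib,
    ← Finset.mul_sum, ← Finset.sum_mul, current]
  ring

/-- Green's formula on the finite subtree below `r`: everything cancels except the current
leaving through the top edge. -/
theorem sum_subtree_conj_mul_jacobi_sub (g : T.V → ℂ) (r : T.V) :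
    ∑ t ∈ T.subtree r, (conj (g t) * T.jacobi lam beta g t - conj (T.jacobi lam beta g t) * g t) =
      T.current lam g r := by
  classical
  simp only [conj_mul_jacobi_sub, Finset.sum_sub_distrib, sum_sum_children_subtree]
  rw [← Finset.add_sum_erase _ _ (T.self_mem_subtree r), add_sub_cancel_right]

theorem norm_current_le (hlam : ∀ t, 0 < lam t) (g : T.V → ℂ) (t : T.V) :
    ‖T.current lam g t‖ ≤ 2 * lam t * (‖g t‖ * ‖g (T.parent t)‖) := by
  rw [current, norm_mul, Complex.norm_real, Real.norm_of_nonneg (hlam t).le, mul_comm 2 (lam t),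
    mul_assoc (lam t) 2]
  refine mul_le_mul_of_nonneg_left ?_ (hlam t).le
  refine (norm_sub_le (conj (g t) * g (T.parent t)) _).trans_eq ?_
  simp only [norm_mul, Complex.norm_conj]
  ring

theorem abs_im_mul_sum_subtree_le (hlam : ∀ t, 0 < lam t) {z : ℂ} {g : T.V → ℂ}
    (hg : ∀ t, T.jacobi lam beta g t = z * g t) (r : T.V) :
    |z.im| * ∑ t ∈ T.subtree r, ‖g t‖ ^ 2 ≤ lam r * (‖g r‖ * ‖g (T.parent r)‖) := by
  have hgreen := T.sum_subtree_conj_mul_jacobi_sub lam beta g r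
  have hlhs : ∀ t, conj (g t) * T.jacobi lam beta g t - conj (T.jacobi lam beta g t) * g t =
      (z - conj z) * (‖g t‖ ^ 2 : ℝ) := fun t => by
    rw [hg, map_mul, Complex.ofReal_pow, ← Complex.conj_mul']; ring
  simp only [hlhs, ← Finset.mul_sum, Complex.sub_conj, ← Complex.ofReal_sum] at hgreen
  have := T.norm_current_le lam hlam g r
  rw [← hgreen, norm_mul, norm_mul, Complex.norm_I, mul_one, Complex.norm_real, Complex.norm_real,
    Real.norm_of_nonneg (Finset.sum_nonneg fun t _ => by positivity), Real.norm_eq_abs,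
    abs_mul, abs_two] at this
  linarith

theorem eq_zero_of_jacobi_eq_smul (hlam : ∀ t, 0 < lam t)
    (x : ℕ → T.V) (hpath : ∀ n, x (n + 1) = T.parent (x n))
    (hdiv : ¬ Summable fun n => (lam (x n))⁻¹)
    {z : ℂ} (hz : z.im ≠ 0) {g : T.V → ℂ} (hg2 : Summable fun t => ‖g t‖ ^ 2)
    (hg : ∀ t, T.jacobi lam beta g t = z * g t) : g = 0 := by
  have hx : ∀ n, x n = T.parent^[n] (x 0) := fun n => by
    induction n with
    | zero => rfl
    | succ n ih => rw [hpath, ih, Function.iterate_succ_apply']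
  have hinj : Function.Injective x := fun a b hab => by
    have := congrArg T.level hab
    rw [hx a, hx b, level_iterate_parent, level_iterate_parent] at this
    omega
  funext s
  by_contra hs
  obtain ⟨k, l, hkl⟩ := T.connected s (x 0)
  have hdesc : ∀ n, T.descend s (x (n + l)) := fun n => by
    rw [hx, Function.iterate_add_apply, ← hx]
    exact T.descend_iterate_parent ⟨k, hkl.trans (hx l).symm⟩ n
  have hbound : ∀ n, |z.im| * ‖g s‖ ^ 2 ≤
      lam (x (n + l)) * (‖g (x (n + l))‖ * ‖g (x (n + 1 + l))‖) := fun n => by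
    calc |z.im| * ‖g s‖ ^ 2 ≤ |z.im| * ∑ t ∈ T.subtree (x (n + l)), ‖g t‖ ^ 2 := by
          gcongr
          exact Finset.single_le_sum (f := fun t => ‖g t‖ ^ 2) (fun t _ => by positivity)
            (T.mem_subtree.mpr (hdesc n))
      _ ≤ _ := T.abs_im_mul_sum_subtree_le lam beta hlam hg _
      _ = _ := by rw [Nat.add_right_comm, hpath]
  refine hdiv ((summable_nat_add_iff l).mp (summable_inv_of_le_mul_mul_succ (by positivity)
    (fun n => hlam _) ?_ hbound))
  exact hg2.comp_injective (hinj.comp (add_left_injective l))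

theorem jacobi_single_apply [DecidableEq T.V] (t s : T.V) :
    T.jacobi lam beta (Pi.single t 1) s = (if T.parent s = t then (lam s : ℂ) else 0) +
      (if s = t then (beta s : ℂ) else 0) + (if T.parent t = s then (lam t : ℂ) else 0) := by
  simp only [jacobi, Pi.single_apply, mul_ite, mul_one, mul_zero, Finset.sum_ite_eq', T.mem_children]

theorem hasSum_conj_jacobi_single_mul [DecidableEq T.V] (g : T.V → ℂ) (t : T.V) :
    HasSum (fun s => conj (T.jacobi lam beta (Pi.single t 1) s) * g s)
      (T.jacobi lam beta g t) := by
  simp only [jacobi_single_apply, map_add, apply_ite (starRingEnd ℂ), map_zero,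
    Complex.conj_ofReal, add_mul, ite_mul, zero_mul]
  have hchildren := hasSum_sum_of_ne_finset_zero (L := .unconditional _) (s := T.children t)
    (f := fun s => if T.parent s = t then (lam s : ℂ) * g s else 0)
    fun s hs => if_neg fun h => hs ((T.mem_children t s).mpr h)
  have hself := hasSum_single (f := fun s => if s = t then (beta s : ℂ) * g s else 0) t
    fun s hs => if_neg hs
  have hparent := hasSum_single
    (f := fun s => if T.parent t = s then (lam t : ℂ) * g s else 0) (T.parent t)
    fun s hs => if_neg (Ne.symm hs)
  convert (hchildren.add hself).add hparent using 1
  simp only [jacobi, if_pos, Finset.sum_congr rfl fun s hs => if_pos ((T.mem_children t s).mp hs)]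
  ring

theorem jacobi_eq_of_orthogonal_range [DecidableEq T.V]
    (A : lp (fun _ : T.V => ℂ) 2 →ₗ.[ℂ] lp (fun _ : T.V => ℂ) 2)
    (hsingle : ∀ t, lp.single 2 t (1 : ℂ) ∈ A.domain)
    (hA : ∀ f : A.domain, ∀ t : T.V,
      ((A f : lp (fun _ : T.V => ℂ) 2) : ∀ _ : T.V, ℂ) t =
        T.jacobi lam beta (fun s => ((f : lp (fun _ : T.V => ℂ) 2) : ∀ _ : T.V, ℂ) s) t)
    {c : ℂ} {g : lp (fun _ : T.V => ℂ) 2}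
    (hg : ∀ f : A.domain, inner ℂ (A f + c • (f : lp (fun _ : T.V => ℂ) 2)) g = 0) (t : T.V) :
    T.jacobi lam beta g t = -conj c * g t := by
  let δ : A.domain := ⟨lp.single 2 t 1, hsingle t⟩
  have hAδ : inner ℂ (A δ) g = T.jacobi lam beta g t := by
    have hterm : ∀ s, inner ℂ ((A δ : lp (fun _ : T.V => ℂ) 2) s) (g s) =
        conj (T.jacobi lam beta (Pi.single t 1) s) * g s := fun s => by
      rw [hA, RCLike.inner_apply, mul_comm]
      rfl
    simp only [lp.inner_eq_tsum, hterm]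
    exact (T.hasSum_conj_jacobi_single_mul lam beta g t).tsum_eq
  have hδ : inner ℂ (δ : lp (fun _ : T.V => ℂ) 2) g = g t := by
    simp [δ, lp.inner_single_left]
  have := hg δ
  rw [inner_add_left, inner_smul_left, hAδ, hδ] at this
  linear_combination this

end JTree

theorem stmt_9_general (T : JTree) (lam beta : T.V → ℝ) (hlam : ∀ t, 0 < lam t)
    (x : ℕ → T.V) (hpath : ∀ n, x (n + 1) = T.parent (x n))
    (hdiv : ¬ Summable (fun n : ℕ => (lam (x n))⁻¹))
    (A : lp (fun _ : T.V => ℂ) 2 →ₗ.[ℂ] lp (fun _ : T.V => ℂ) 2)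
    (hdom : ∀ f : lp (fun _ : T.V => ℂ) 2,
      f ∈ A.domain ↔ {t : T.V | (f : ∀ _ : T.V, ℂ) t ≠ 0}.Finite)
    (hA : ∀ f : A.domain, ∀ t : T.V,
      ((A f : lp (fun _ : T.V => ℂ) 2) : ∀ _ : T.V, ℂ) t =
        T.jacobi lam beta (fun s => ((f : lp (fun _ : T.V => ℂ) 2) : ∀ _ : T.V, ℂ) s) t) :
    EssSelfAdjoint A := by
  classical
  have hsingle : ∀ t, lp.single 2 t (1 : ℂ) ∈ A.domain := fun t =>
    (hdom _).mpr ((Set.finite_singleton t).subset fun s hs => by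
      by_contra hst
      exact hs (lp.single_apply_ne 2 t _ hst))
  have hsq : ∀ g : lp (fun _ : T.V => ℂ) 2, Summable fun t => ‖g t‖ ^ 2 := fun g => by
    simpa using (lp.memℓp g).summable (by norm_num)
  have hdense : ∀ c : ℂ, c.im ≠ 0 →
      Dense (Set.range fun f : A.domain => A f + c • (f : lp (fun _ : T.V => ℂ) 2)) :=
    fun c hc => A.dense_range_add_smul_of_orthogonal c fun g hg => lp.ext <|
      T.eq_zero_of_jacobi_eq_smul lam beta hlam x hpath hdiv (z := -conj c) (by simpa using hc)
        (hsq g) (T.jacobi_eq_of_orthogonal_range lam beta A hsingle hA hg)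
  refine ⟨hdense Complex.I (by simp), ?_⟩
  simpa only [sub_eq_add_neg, ← neg_smul] using hdense (-Complex.I) (by simp)

/-- Carleman-type criterion: if `Σ_n 1/λ_{x_n} = ∞` along some infinite path, then
the Jacobi operator `J`, defined on the finitely supported functions in `ℓ²(Γ)`,
is essentially self-adjoint. -/
theorem stmt_9 (T : JTree) (lam beta : T.V → ℝ) (hlam : ∀ t, 0 < lam t)
    (x : ℕ → T.V) (hpath : ∀ n, x (n + 1) = T.parent (x n))
    (hx0 : T.level (x 0) = 0)
    (hdiv : ¬ Summable (fun n : ℕ => (lam (x n))⁻¹))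
    (A : lp (fun _ : T.V => ℂ) 2 →ₗ.[ℂ] lp (fun _ : T.V => ℂ) 2)
    (hdom : ∀ f : lp (fun _ : T.V => ℂ) 2,
      f ∈ A.domain ↔ {t : T.V | (f : ∀ _ : T.V, ℂ) t ≠ 0}.Finite)
    (hA : ∀ f : A.domain, ∀ t : T.V,
      ((A f : lp (fun _ : T.V => ℂ) 2) : ∀ _ : T.V, ℂ) t =
        T.jacobi lam beta (fun s => ((f : lp (fun _ : T.V => ℂ) 2) : ∀ _ : T.V, ℂ) s) t) :
    EssSelfAdjoint A :=
  stmt_9_general T lam beta hlam x hpath hdiv A hdom hA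
end
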